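/- arXiv:2510.16427 — 6 statements merged into one kernel-verified Lean document; each statement's English description precedes it below -/
import Mathlib

section
/- Let f : ℝ^d × ℝ^d → ℝ^d satisfy |f(x,y)| ≤ L(1 + |x-y|)^{q+1} for all x, y ∈ ℝ^d, for constants L > 0 and q > 0. For n ∈ ℕ with n ≥ 1, define the tamed function f^n(x,y) := f(x,y) / (1 + n^{-1/2}|x-y|^{2q}). Then there exists a constant K > 0, independent of n, such that |f^n(x,y)| ≤ K · min{ n^{1/4}(1 + |x-y|), |f(x,y)| } for all x, y ∈ ℝ^d. -/
/-!
Write `r = ‖x - y‖` and `m = n ^ (1/4)`, so that the taming factor is `c = 1 + m⁻² r ^ (2q) ≥ 1`.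
Dividing by `c` can only shrink `f`, which gives the bound by `‖f‖`. For the other bound,
AM-GM gives `r ^ q ≤ m + r ^ (2q) / m = m c`, hence `(1 + r) ^ q ≤ 2 ^ q (1 + r ^ q) ≤ 2 ^ (q+1) m c`,
and the growth bound `‖f‖ ≤ L (1 + r) ^ q (1 + r)` turns this into `‖f‖ / c ≤ 2 ^ (q+1) L m (1 + r)`.
-/

open Real

lemma Real.add_rpow_le_two_rpow_mul_rpow_add_rpow {a b p : ℝ} (ha : 0 ≤ a) (hb : 0 ≤ b)
    (hp : 0 ≤ p) : (a + b) ^ p ≤ 2 ^ p * (a ^ p + b ^ p) := calc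
  (a + b) ^ p ≤ (2 * max a b) ^ p := by
    rw [two_mul]; gcongr
    exacts [le_max_left a b, le_max_right a b]
  _ = 2 ^ p * max (a ^ p) (b ^ p) := by
    rw [mul_rpow zero_le_two (le_max_of_le_left ha), rpow_max ha hb hp]
  _ ≤ 2 ^ p * (a ^ p + b ^ p) := by
    gcongr; exact max_le_add_of_nonneg (rpow_nonneg ha p) (rpow_nonneg hb p)

lemma le_mul_one_add_inv_sq_mul_sq {m : ℝ} (hm : 0 < m) (u : ℝ) :
    u ≤ m * (1 + (m ^ 2)⁻¹ * u ^ 2) := by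
  have : m * (1 + (m ^ 2)⁻¹ * u ^ 2) = m + u ^ 2 / m := by field_simp
  rw [this, ← sub_nonneg, show m + u ^ 2 / m - u = ((u - m / 2) ^ 2 + 3 / 4 * m ^ 2) / m by
    field_simp; ring]
  positivity

lemma one_add_rpow_le_two_rpow_mul_taming {q r m : ℝ} (hq : 0 ≤ q) (hr : 0 ≤ r) (hm : 1 ≤ m) :
    (1 + r) ^ q ≤ 2 ^ (q + 1) * (m * (1 + (m ^ 2)⁻¹ * r ^ (2 * q))) := by
  set c := 1 + (m ^ 2)⁻¹ * r ^ (2 * q)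
  have hc : 1 ≤ c := le_add_of_nonneg_right (by positivity)
  have hrq : r ^ q ≤ m * c := by
    have hsq : r ^ (2 * q) = (r ^ q) ^ 2 := by rw [mul_comm, rpow_mul hr]; norm_cast
    simpa only [c, hsq] using le_mul_one_add_inv_sq_mul_sq (one_pos.trans_le hm) (r ^ q)
  calc (1 + r) ^ q ≤ 2 ^ q * (1 + r ^ q) := by
        simpa using add_rpow_le_two_rpow_mul_rpow_add_rpow zero_le_one hr hq
    _ ≤ 2 ^ q * (m * c + m * c) := by gcongr; nlinarith
    _ = 2 ^ (q + 1) * (m * c) := by rw [rpow_add_one two_ne_zero]; ring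

section Taming

variable {E : Type*} [NormedAddCommGroup E] [NormedSpace ℝ E]

lemma norm_inv_smul_le_of_one_le {c : ℝ} (hc : 1 ≤ c) (v : E) : ‖c⁻¹ • v‖ ≤ ‖v‖ := by
  rw [norm_smul, norm_inv, Real.norm_of_nonneg (zero_le_one.trans hc)]
  exact mul_le_of_le_one_left (norm_nonneg v) (inv_le_one_of_one_le₀ hc)

lemma norm_taming_smul_le {v : E} {L q r m : ℝ} (hL : 0 ≤ L) (hq : 0 ≤ q) (hr : 0 ≤ r)
    (hm : 1 ≤ m) (hv : ‖v‖ ≤ L * (1 + r) ^ (q + 1)) :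
    ‖(1 + (m ^ 2)⁻¹ * r ^ (2 * q))⁻¹ • v‖ ≤ 2 ^ (q + 1) * L * (m * (1 + r)) := by
  set c := 1 + (m ^ 2)⁻¹ * r ^ (2 * q)
  have hc : 0 < c := by positivity
  rw [norm_smul, norm_inv, Real.norm_of_nonneg hc.le, inv_mul_le_iff₀ hc]
  calc ‖v‖ ≤ L * ((1 + r) ^ q * (1 + r)) := by
        rwa [← rpow_add_one (by positivity : 1 + r ≠ 0)]
    _ ≤ L * (2 ^ (q + 1) * (m * c) * (1 + r)) := by
        gcongr; exact one_add_rpow_le_two_rpow_mul_taming hq hr hm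
    _ = c * (2 ^ (q + 1) * L * (m * (1 + r))) := by ring

end Taming

theorem stmt2 (d : ℕ)
    (f : EuclideanSpace ℝ (Fin d) → EuclideanSpace ℝ (Fin d) → EuclideanSpace ℝ (Fin d))
    (L q : ℝ) (hL : 0 < L) (hq : 0 < q)
    (hf : ∀ x y : EuclideanSpace ℝ (Fin d), ‖f x y‖ ≤ L * (1 + ‖x - y‖) ^ (q + 1)) :
    ∃ K > 0, ∀ n : ℕ, 1 ≤ n → ∀ x y : EuclideanSpace ℝ (Fin d),
      ‖(1 + (n : ℝ) ^ (-(1/2) : ℝ) * ‖x - y‖ ^ (2 * q))⁻¹ • f x y‖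
        ≤ K * min ((n : ℝ) ^ ((1 : ℝ)/4) * (1 + ‖x - y‖)) ‖f x y‖ := by
  refine ⟨1 + 2 ^ (q + 1) * L, by positivity, fun n hn x y => ?_⟩
  set m := (n : ℝ) ^ ((1 : ℝ)/4)
  have hn' : (1 : ℝ) ≤ n := by exact_mod_cast hn
  have hm : 1 ≤ m := one_le_rpow hn' (by norm_num)
  have hsm : (n : ℝ) ^ (-(1/2) : ℝ) = (m ^ 2)⁻¹ := by
    rw [← rpow_natCast, ← rpow_mul (by positivity), ← rpow_neg (by positivity)]
    norm_num
  rw [hsm, mul_min_of_nonneg _ _ (by positivity)]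
  refine le_min ?_ ?_
  · calc _ ≤ 2 ^ (q + 1) * L * (m * (1 + ‖x - y‖)) :=
          norm_taming_smul_le hL.le hq.le (norm_nonneg _) hm (hf x y)
      _ ≤ _ := by gcongr; linarith
  · calc _ ≤ ‖f x y‖ := norm_inv_smul_le_of_one_le (le_add_of_nonneg_right (by positivity)) _
      _ ≤ _ := le_mul_of_one_le_left (norm_nonneg _) (by linarith [show 0 < 2 ^ (q + 1) * L by positivity])
end

section
/- Let g : ℝ^d × ℝ^d → ℝ^{d×l} satisfy |g(x,y)|² ≤ L(1 + |x-y|)^{q+2} for all x, y ∈ ℝ^d, for constants L > 0 and q > 0. For n ∈ ℕ with n ≥ 1, define g^n(x,y) := g(x,y)/(1 + n^{-1/2}|x-y|^{2q}). Then there exists a constant K > 0, independent of n, such that |g^n(x,y)|² ≤ K · min{ n^{1/4}(1 + |x-y|²), |g(x,y)|² } for all x, y ∈ ℝ^d. -/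
/-!
Write `r = |x - y|` and `D = 1 + n^{-1/2} r^{2q} ≥ 1`. The bound by `|g|²` holds since
`D⁻² ≤ 1`. For the other one, `(1 + r)^{q+2} ≤ 2^{q+2} m^q m²` with `m = max 1 r`, where
`m² ≤ 1 + r²`, and by AM-GM `m^q ≤ n^{1/4} D`; hence `D⁻² |g|² ≤ D⁻¹ |g|²` is at most
`L 2^{q+2} n^{1/4} (1 + r²)`.
-/

open Real

lemma one_add_rpow_le_two_rpow_mul_max_one_rpow {r p : ℝ} (hr : 0 ≤ r) (hp : 0 ≤ p) :
    (1 + r) ^ p ≤ 2 ^ p * max 1 r ^ p := by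
  rw [← mul_rpow zero_le_two (by positivity)]
  exact rpow_le_rpow (by positivity) (by linarith [le_max_left 1 r, le_max_right 1 r]) hp

lemma le_mul_one_add_sq_div_sq {u v : ℝ} (hu : 0 < u) : v ≤ u * (1 + v ^ 2 / u ^ 2) := by
  have hsplit : u * (1 + v ^ 2 / u ^ 2) = u + v ^ 2 / u := by field_simp
  rw [hsplit, ← sub_le_iff_le_add', le_div_iff₀ hu]
  nlinarith [sq_nonneg (u - v)]

-- AM-GM for `n^{1/4}` and `r^q` when `r ≥ 1`.
lemma max_one_rpow_le_rpow_mul_damping {n r q : ℝ} (hn : 1 ≤ n) (hr : 0 ≤ r) :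
    max 1 r ^ q ≤ n ^ (1 / 4 : ℝ) * (1 + n ^ (-(1 / 2) : ℝ) * r ^ (2 * q)) := by
  have hu : 1 ≤ n ^ (1 / 4 : ℝ) := one_le_rpow hn (by norm_num)
  have hdamp : n ^ (-(1 / 2) : ℝ) * r ^ (2 * q) = (r ^ q) ^ 2 / (n ^ (1 / 4 : ℝ)) ^ 2 := by
    rw [← rpow_natCast, ← rpow_natCast, ← rpow_mul hr, ← rpow_mul (by linarith), rpow_neg
      (by linarith), div_eq_inv_mul]
    norm_num [mul_comm, div_eq_mul_inv]
  rw [hdamp]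
  rcases le_total r 1 with hr1 | hr1
  · rw [max_eq_left hr1, one_rpow]
    exact hu.trans (le_mul_of_one_le_right (by linarith) (le_add_of_nonneg_right (by positivity)))
  · rw [max_eq_right hr1]
    exact le_mul_one_add_sq_div_sq (by linarith)

lemma inv_damping_mul_le {n r q A L : ℝ} (hn : 1 ≤ n) (hr : 0 ≤ r) (hq : 0 ≤ q) (hL : 0 ≤ L)
    (hA : A ≤ L * (1 + r) ^ (q + 2)) :
    (1 + n ^ (-(1 / 2) : ℝ) * r ^ (2 * q))⁻¹ * A
      ≤ L * 2 ^ (q + 2) * (n ^ (1 / 4 : ℝ) * (1 + r ^ 2)) := by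
  have hm2 : max 1 r ^ (2 : ℝ) ≤ 1 + r ^ 2 := by
    rw [rpow_two]
    rcases le_total r 1 with hr1 | hr1
    · rw [max_eq_left hr1]; nlinarith
    · rw [max_eq_right hr1]; linarith
  set m := max 1 r
  have hm : 0 < m := lt_max_of_lt_left one_pos
  rw [inv_mul_le_iff₀ (by positivity)]
  calc A ≤ L * (2 ^ (q + 2) * m ^ (q + 2)) :=
        hA.trans (by gcongr; exact one_add_rpow_le_two_rpow_mul_max_one_rpow hr (by linarith))
    _ = L * 2 ^ (q + 2) * (m ^ q * m ^ (2 : ℝ)) := by rw [rpow_add hm]; ring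
    _ ≤ L * 2 ^ (q + 2) * ((n ^ (1 / 4 : ℝ) * (1 + n ^ (-(1 / 2) : ℝ) * r ^ (2 * q)))
          * (1 + r ^ 2)) := by
        gcongr
        exact max_one_rpow_le_rpow_mul_damping hn hr
    _ = _ := by ring

theorem stmt3 (d l : ℕ)
    (g : EuclideanSpace ℝ (Fin d) → EuclideanSpace ℝ (Fin d) → EuclideanSpace ℝ (Fin d × Fin l))
    (L q : ℝ) (hL : 0 < L) (hq : 0 < q)
    (hg : ∀ x y : EuclideanSpace ℝ (Fin d), ‖g x y‖ ^ 2 ≤ L * (1 + ‖x - y‖) ^ (q + 2)) :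
    ∃ K > 0, ∀ n : ℕ, 1 ≤ n → ∀ x y : EuclideanSpace ℝ (Fin d),
      ‖(1 + (n : ℝ) ^ (-(1/2) : ℝ) * ‖x - y‖ ^ (2 * q))⁻¹ • g x y‖ ^ 2
        ≤ K * min ((n : ℝ) ^ ((1 : ℝ)/4) * (1 + ‖x - y‖ ^ 2)) (‖g x y‖ ^ 2) := by
  refine ⟨L * 2 ^ (q + 2) + 1, by positivity, fun n hn x y => ?_⟩
  set D := 1 + (n : ℝ) ^ (-(1/2) : ℝ) * ‖x - y‖ ^ (2 * q)
  have hD : 1 ≤ D := le_add_of_nonneg_right (by positivity)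
  have hD_inv : D⁻¹ ≤ 1 := inv_le_one_of_one_le₀ hD
  have hD_inv_sq : D⁻¹ ^ 2 ≤ D⁻¹ := pow_le_of_le_one (by positivity) hD_inv two_ne_zero
  rw [norm_smul, mul_pow, norm_of_nonneg (by positivity), mul_min_of_nonneg _ _ (by positivity)]
  refine le_min ?_ ?_
  · calc D⁻¹ ^ 2 * ‖g x y‖ ^ 2 ≤ D⁻¹ * ‖g x y‖ ^ 2 := by gcongr
      _ ≤ L * 2 ^ (q + 2) * ((n : ℝ) ^ ((1 : ℝ)/4) * (1 + ‖x - y‖ ^ 2)) :=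
        inv_damping_mul_le (by exact_mod_cast hn) (norm_nonneg _) hq.le hL.le (hg x y)
      _ ≤ _ := by gcongr; linarith
  · calc D⁻¹ ^ 2 * ‖g x y‖ ^ 2 ≤ 1 * ‖g x y‖ ^ 2 := by gcongr; exact hD_inv_sq.trans hD_inv
      _ ≤ _ := by gcongr; linarith [show 0 < L * 2 ^ (q + 2) by positivity]
end

section
/- Let f : ℝ^d × ℝ^d → ℝ^d and g : ℝ^d × ℝ^d → ℝ^{d×l} with f anti-symmetric. Assume, for constants L ≥ 0 and ρ ≥ 2: (i) ⟨x-y, f(x,y)⟩ + 2(ρ-1)|g(x,y)|² ≤ L(1 + |x-y|²) for all x,y; (ii) (|x|^{ρ-2} - |y|^{ρ-2})⟨x+y, f(x,y)⟩ ≤ L(|x|^ρ + |y|^ρ) for all x,y. Then there exists a constant C > 0 depending only on L and ρ such that for all N ∈ ℕ and all x¹,…,x^N ∈ ℝ^d, (1/N²) Σ_{i,j=1}^N |x^i|^{ρ-2} ( ⟨x^i, f(x^i,x^j)⟩ + (ρ-1)|g(x^i,x^j)|² ) ≤ C (1 + (1/N) Σ_{i=1}^N |x^i|^{ρ} ). 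-/
/-!
Split `⟪xⁱ, f⟫ = ½⟪xⁱ - xʲ, f⟫ + ½⟪xⁱ + xʲ, f⟫`. The first half, together with the `g`-term, is
controlled pointwise by (i), and Young's inequality `|xⁱ|^(ρ-2) |xʲ|² ≤ |xⁱ|^ρ + |xʲ|^ρ` turns
`|xⁱ|^(ρ-2) (1 + |xⁱ - xʲ|²)` into `1 + 5 (|xⁱ|^ρ + |xʲ|^ρ)`. For the second half, the kernel
`⟪xⁱ + xʲ, f(xⁱ, xʲ)⟫` is antisymmetric in `(i, j)`, so the weighted double sum equals half the
double sum of `(|xⁱ|^(ρ-2) - |xʲ|^(ρ-2)) ⟪xⁱ + xʲ, f⟫`, which (ii) bounds.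
-/

open RealInnerProductSpace Finset

namespace Real

variable {ρ s t : ℝ}

lemma rpow_sub_two_mul_sq (hρ : 2 ≤ ρ) (hs : 0 ≤ s) : s ^ (ρ - 2) * s ^ 2 = s ^ ρ := by
  rw [← rpow_add_natCast' hs (by push_cast; linarith)]
  norm_num

lemma rpow_sub_two_le_one_add_rpow (hρ : 2 ≤ ρ) (hs : 0 ≤ s) : s ^ (ρ - 2) ≤ 1 + s ^ ρ := by
  rcases le_total s 1 with h | h
  · linarith [rpow_le_one hs h (by linarith : (0 : ℝ) ≤ ρ - 2), rpow_nonneg hs ρ]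
  · linarith [rpow_le_rpow_of_exponent_le h (by linarith : ρ - 2 ≤ ρ), rpow_nonneg hs ρ]

lemma rpow_sub_two_mul_sq_le (hρ : 2 ≤ ρ) (hs : 0 ≤ s) (ht : 0 ≤ t) :
    s ^ (ρ - 2) * t ^ 2 ≤ s ^ ρ + t ^ ρ := by
  rcases le_total s t with h | h
  · calc s ^ (ρ - 2) * t ^ 2 ≤ t ^ (ρ - 2) * t ^ 2 := by gcongr
      _ = t ^ ρ := rpow_sub_two_mul_sq hρ ht
      _ ≤ s ^ ρ + t ^ ρ := le_add_of_nonneg_left (rpow_nonneg hs ρ)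
  · calc s ^ (ρ - 2) * t ^ 2 ≤ s ^ (ρ - 2) * s ^ 2 := by gcongr
      _ = s ^ ρ := rpow_sub_two_mul_sq hρ hs
      _ ≤ s ^ ρ + t ^ ρ := le_add_of_nonneg_right (rpow_nonneg ht ρ)

lemma rpow_sub_two_mul_one_add_sq_le {u : ℝ} (hρ : 2 ≤ ρ) (hs : 0 ≤ s) (ht : 0 ≤ t)
    (hu : 0 ≤ u) (hust : u ≤ s + t) :
    s ^ (ρ - 2) * (1 + u ^ 2) ≤ 1 + 5 * (s ^ ρ + t ^ ρ) := by
  have hu2 : u ^ 2 ≤ 2 * s ^ 2 + 2 * t ^ 2 := by nlinarith [sq_nonneg (s - t)]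
  have hw : 0 ≤ s ^ (ρ - 2) := rpow_nonneg hs _
  have hss := rpow_sub_two_mul_sq hρ hs
  have hst := rpow_sub_two_mul_sq_le hρ hs ht
  have hs1 := rpow_sub_two_le_one_add_rpow hρ hs
  nlinarith [mul_le_mul_of_nonneg_left hu2 hw, rpow_nonneg hs ρ, rpow_nonneg ht ρ]

end Real

section DoubleSum

variable {ι R : Type*} [Fintype ι]

lemma two_mul_sum_sum_mul_of_antisymm [CommRing R] (b : ι → R) (F : ι → ι → R)
    (hF : ∀ i j, F j i = -F i j) :
    2 * ∑ i, ∑ j, b i * F i j = ∑ i, ∑ j, (b i - b j) * F i j := by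
  have hswap : ∑ i, ∑ j, b j * F i j = -∑ i, ∑ j, b i * F i j := by
    rw [sum_comm]
    simp only [← sum_neg_distrib]
    exact sum_congr rfl fun i _ => sum_congr rfl fun j _ => by rw [hF, mul_neg]
  simp only [sub_mul, sum_sub_distrib, hswap]
  ring

lemma sum_sum_add [CommSemiring R] (c : ι → R) :
    ∑ i, ∑ j, (c i + c j) = 2 * Fintype.card ι * ∑ i, c i := by
  simp only [sum_add_distrib, sum_const, card_univ, nsmul_eq_mul, ← mul_sum]
  ring

end DoubleSum

section Drift

variable {E G : Type*} [NormedAddCommGroup E] [InnerProductSpace ℝ E] [NormedAddCommGroup G]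
  {f : E → E → E} {g : E → E → G} {L ρ : ℝ} {ι : Type*} [Fintype ι]

lemma rpow_mul_drift_le (hL : 0 ≤ L) (hρ : 2 ≤ ρ)
    (h1 : ∀ x y, ⟪x - y, f x y⟫ + 2 * (ρ - 1) * ‖g x y‖ ^ 2 ≤ L * (1 + ‖x - y‖ ^ 2)) (x y : E) :
    ‖x‖ ^ (ρ - 2) * (⟪x, f x y⟫ + (ρ - 1) * ‖g x y‖ ^ 2)
      ≤ ‖x‖ ^ (ρ - 2) * ⟪x + y, f x y⟫ / 2 + L / 2 * (1 + 5 * (‖x‖ ^ ρ + ‖y‖ ^ ρ)) := by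
  have hw : 0 ≤ ‖x‖ ^ (ρ - 2) := Real.rpow_nonneg (norm_nonneg _) _
  have hdiss := mul_le_mul_of_nonneg_left (h1 x y) hw
  have hyoung := mul_le_mul_of_nonneg_left
    (Real.rpow_sub_two_mul_one_add_sq_le hρ (norm_nonneg x) (norm_nonneg y) (norm_nonneg _)
      (norm_sub_le x y)) hL
  rw [inner_sub_left] at hdiss
  rw [inner_add_left]
  nlinarith

lemma sum_sum_rpow_mul_inner_add_le (hanti : ∀ x y, f x y = -f y x)
    (h2 : ∀ x y, (‖x‖ ^ (ρ - 2) - ‖y‖ ^ (ρ - 2)) * ⟪x + y, f x y⟫ ≤ L * (‖x‖ ^ ρ + ‖y‖ ^ ρ))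
    (x : ι → E) :
    ∑ i, ∑ j, ‖x i‖ ^ (ρ - 2) * ⟪x i + x j, f (x i) (x j)⟫
      ≤ L * Fintype.card ι * ∑ i, ‖x i‖ ^ ρ := by
  have hF : ∀ i j, ⟪x j + x i, f (x j) (x i)⟫ = -⟪x i + x j, f (x i) (x j)⟫ := fun i j => by
    rw [hanti (x j), inner_neg_right, add_comm]
  have hsym := two_mul_sum_sum_mul_of_antisymm (fun i => ‖x i‖ ^ (ρ - 2)) _ hF
  have hbound : ∑ i, ∑ j, (‖x i‖ ^ (ρ - 2) - ‖x j‖ ^ (ρ - 2)) * ⟪x i + x j, f (x i) (x j)⟫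
      ≤ ∑ i, ∑ j, L * (‖x i‖ ^ ρ + ‖x j‖ ^ ρ) :=
    sum_le_sum fun i _ => sum_le_sum fun j _ => h2 (x i) (x j)
  simp only [← mul_sum, sum_sum_add (fun i => ‖x i‖ ^ ρ)] at hbound
  linarith

lemma sum_sum_rpow_mul_drift_le (hL : 0 ≤ L) (hρ : 2 ≤ ρ)
    (hanti : ∀ x y, f x y = -f y x)
    (h1 : ∀ x y, ⟪x - y, f x y⟫ + 2 * (ρ - 1) * ‖g x y‖ ^ 2 ≤ L * (1 + ‖x - y‖ ^ 2))
    (h2 : ∀ x y, (‖x‖ ^ (ρ - 2) - ‖y‖ ^ (ρ - 2)) * ⟪x + y, f x y⟫ ≤ L * (‖x‖ ^ ρ + ‖y‖ ^ ρ))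
    (x : ι → E) :
    ∑ i, ∑ j, ‖x i‖ ^ (ρ - 2) * (⟪x i, f (x i) (x j)⟫ + (ρ - 1) * ‖g (x i) (x j)‖ ^ 2)
      ≤ L / 2 * Fintype.card ι ^ 2 + 11 * L / 2 * (Fintype.card ι * ∑ i, ‖x i‖ ^ ρ) := by
  have hpoint := sum_le_sum fun i (_ : i ∈ univ) => sum_le_sum fun j (_ : j ∈ univ) =>
    rpow_mul_drift_le (g := g) hL hρ h1 (x i) (x j)
  have hsym := sum_sum_rpow_mul_inner_add_le hanti h2 x
  have hconst : ∑ i, ∑ j, L / 2 * (1 + 5 * (‖x i‖ ^ ρ + ‖x j‖ ^ ρ))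
      = L / 2 * Fintype.card ι ^ 2 + 5 * L * (Fintype.card ι * ∑ i, ‖x i‖ ^ ρ) := by
    calc _ = ∑ i, ∑ j, (L / 2 + 5 * L / 2 * (‖x i‖ ^ ρ + ‖x j‖ ^ ρ)) :=
          sum_congr rfl fun i _ => sum_congr rfl fun j _ => by ring
      _ = _ := by
        simp only [sum_add_distrib, ← mul_sum, sum_const, card_univ, nsmul_eq_mul]
        ring
  simp only [sum_add_distrib, ← sum_div, hconst] at hpoint
  linarith

end Drift

theorem stmt7 (d l : ℕ)
    (f : EuclideanSpace ℝ (Fin d) → EuclideanSpace ℝ (Fin d) → EuclideanSpace ℝ (Fin d))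
    (g : EuclideanSpace ℝ (Fin d) → EuclideanSpace ℝ (Fin d) → EuclideanSpace ℝ (Fin d × Fin l))
    (L ρ : ℝ) (hL : 0 ≤ L) (hρ : 2 ≤ ρ)
    (hanti : ∀ x y : EuclideanSpace ℝ (Fin d), f x y = - f y x)
    (h1 : ∀ x y : EuclideanSpace ℝ (Fin d),
      ⟪x - y, f x y⟫ + 2 * (ρ - 1) * ‖g x y‖ ^ 2 ≤ L * (1 + ‖x - y‖ ^ 2))
    (h2 : ∀ x y : EuclideanSpace ℝ (Fin d),
      (‖x‖ ^ (ρ - 2) - ‖y‖ ^ (ρ - 2)) * ⟪x + y, f x y⟫ ≤ L * (‖x‖ ^ ρ + ‖y‖ ^ ρ)) :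
    ∃ C > 0, ∀ (N : ℕ) (x : Fin N → EuclideanSpace ℝ (Fin d)),
      (1 / (N : ℝ) ^ 2) *
          ∑ i, ∑ j, ‖x i‖ ^ (ρ - 2) *
            (⟪x i, f (x i) (x j)⟫ + (ρ - 1) * ‖g (x i) (x j)‖ ^ 2)
        ≤ C * (1 + (1 / (N : ℝ)) * ∑ i, ‖x i‖ ^ ρ) := by
  refine ⟨6 * L + 1, by positivity, fun N x => ?_⟩
  rcases N.eq_zero_or_pos with rfl | hN
  · simpa using (by positivity : (0 : ℝ) ≤ 6 * L + 1)
  have hsum := sum_sum_rpow_mul_drift_le hL hρ hanti h1 h2 x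
  rw [Fintype.card_fin] at hsum
  set S := ∑ i, ‖x i‖ ^ ρ
  have hS : 0 ≤ 1 / (N : ℝ) * S := by positivity
  calc 1 / (N : ℝ) ^ 2 * _ ≤ 1 / (N : ℝ) ^ 2 * (L / 2 * N ^ 2 + 11 * L / 2 * (N * S)) := by
        gcongr
    _ = L / 2 + 11 * L / 2 * (1 / N * S) := by field_simp
    _ ≤ (6 * L + 1) * (1 + 1 / N * S) := by nlinarith
end

section
/- Let f : ℝ^d × ℝ^d → ℝ^d be anti-symmetric and let g : ℝ^d × ℝ^d → ℝ^{d×l}. Assume for constants L ≥ 0 and p ≥ 2: (i) (|x-x'|^{p-2} - |y-y'|^{p-2}) ⟨(x+y)-(x'+y'), f(x,y) - f(x',y')⟩ ≤ L(|x-x'|^p + |y-y'|^p); (ii) ⟨(x-y)-(x'-y'), f(x,y) - f(x',y')⟩ + 4(p-1)|g(x,y) - g(x',y')|² ≤ L|(x-y)-(x'-y')|², both for all x,x',y,y' ∈ ℝ^d. Then there exists K > 0, independent of N, such that for all N ∈ ℕ and all x¹,…,x^N, x̄¹,…,x̄^N ∈ ℝ^d, (1/N²) Σ_{i,j=1}^N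 |x^i - x̄^i|^{p-2} ( ⟨x^i - x̄^i, f(x^i,x^j) - f(x̄^i, x̄^j)⟩ + 2(p-1)|g(x^i,x^j) - g(x̄^i,x̄^j)|² ) ≤ (K/N) Σ_{i=1}^N |x^i - x̄^i|^p. -/
/-! Write `e i = x i - xb i`. Splitting `e i = (e i + e j) / 2 + (e i - e j) / 2`, hypothesis (ii)
bounds the `(e i - e j)`-half together with the noise term by `L / 2 * |e i| ^ (p - 2) * |e i - e j| ^ 2`.
Since `f` is anti-symmetric, the `(e i + e j)`-halves of the `(i, j)` and `(j, i)` terms combine to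
`(|e i| ^ (p - 2) - |e j| ^ (p - 2)) / 2 * ⟨e i + e j, F i j⟩`, which (i) bounds. What is left is
controlled by `|e i| ^ p + |e j| ^ p` via `|e i - e j| ^ 2 ≤ 2 (|e i| ^ 2 + |e j| ^ 2)` and Chebyshev's
inequality, so the double sum is at most `5 L N / 2 * ∑ i, |e i| ^ p`. -/

open RealInnerProductSpace

theorem Finset.sum_sum_le_card_nsmul_of_add_swap_le {ι M : Type*} [Fintype ι] [AddCommMonoid M]
    [LinearOrder M] [IsOrderedCancelAddMonoid M] {Q : ι → ι → M} {R : ι → M}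
    (h : ∀ i j, Q i j + Q j i ≤ R i + R j) :
    ∑ i, ∑ j, Q i j ≤ Fintype.card ι • ∑ i, R i := by
  have hQ : ∑ i, ∑ j, (Q i j + Q j i) = 2 • ∑ i, ∑ j, Q i j := by
    rw [two_nsmul]
    simp only [Finset.sum_add_distrib]
    rw [Finset.sum_comm (f := fun i j => Q j i)]
  have hR : ∑ i, ∑ j, (R i + R j) = 2 • (Fintype.card ι • ∑ i, R i) := by
    simp only [Finset.sum_add_distrib, Finset.sum_const, Finset.card_univ, ← Finset.smul_sum]
    rw [two_nsmul]
  rw [← nsmul_le_nsmul_iff_right two_ne_zero, ← hQ, ← hR]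
  exact Finset.sum_le_sum fun i _ => Finset.sum_le_sum fun j _ => h i j

namespace Real

theorem rpow_sub_two_mul_sq_s8 {p t : ℝ} (hp : p ≠ 0) (ht : 0 ≤ t) :
    t ^ (p - 2) * t ^ 2 = t ^ p := by
  have := rpow_add_natCast' ht (y := p - 2) (n := 2) (by norm_num [hp])
  norm_num at this
  exact this.symm

/-- Chebyshev's sum inequality for the two monotone maps `t ↦ t ^ (p - 2)` and `t ↦ t ^ 2`. -/
theorem rpow_sub_two_add_mul_sq_add_sq_le {p s t : ℝ} (hp : 2 ≤ p) (hs : 0 ≤ s) (ht : 0 ≤ t) :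
    (s ^ (p - 2) + t ^ (p - 2)) * (s ^ 2 + t ^ 2) ≤ 2 * (s ^ p + t ^ p) := by
  have hp0 : p ≠ 0 := by linarith
  have hmono : 0 ≤ (s ^ (p - 2) - t ^ (p - 2)) * (s ^ 2 - t ^ 2) := by
    rcases le_total s t with hst | hst
    · exact mul_nonneg_of_nonpos_of_nonpos
        (sub_nonpos.2 (rpow_le_rpow hs hst (by linarith)))
        (sub_nonpos.2 (pow_le_pow_left₀ hs hst 2))
    · exact mul_nonneg (sub_nonneg.2 (rpow_le_rpow ht hst (by linarith)))
        (sub_nonneg.2 (pow_le_pow_left₀ ht hst 2))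
  rw [← rpow_sub_two_mul_sq_s8 hp0 hs, ← rpow_sub_two_mul_sq_s8 hp0 ht]
  nlinarith

end Real

section Interaction

variable {E G : Type*} [NormedAddCommGroup E] [InnerProductSpace ℝ E] [Norm G] [Sub G]
  {f : E → E → E} {g : E → E → G} {L p : ℝ}

theorem interaction_le_of_one_sided_lipschitz
    (h2 : ∀ x x' y y' : E, ⟪(x - y) - (x' - y'), f x y - f x' y'⟫
      + 4 * (p - 1) * ‖g x y - g x' y'‖ ^ 2 ≤ L * ‖(x - y) - (x' - y')‖ ^ 2) (x x' y y' : E) :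
    ‖x - x'‖ ^ (p - 2) * (⟪x - x', f x y - f x' y'⟫ + 2 * (p - 1) * ‖g x y - g x' y'‖ ^ 2)
      ≤ ‖x - x'‖ ^ (p - 2) / 2 * ⟪(x - x') + (y - y'), f x y - f x' y'⟫
        + L / 2 * ‖x - x'‖ ^ (p - 2) * ‖(x - x') - (y - y')‖ ^ 2 := by
  have hxy := h2 x x' y y'
  rw [show (x - y) - (x' - y') = (x - x') - (y - y') by abel, inner_sub_left] at hxy
  rw [inner_add_left]
  nlinarith [mul_le_mul_of_nonneg_left hxy (Real.rpow_nonneg (norm_nonneg (x - x')) (p - 2))]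

theorem interaction_add_swap_le (hL : 0 ≤ L) (hp : 2 ≤ p) (hanti : ∀ x y : E, f x y = - f y x)
    (h1 : ∀ x x' y y' : E, (‖x - x'‖ ^ (p - 2) - ‖y - y'‖ ^ (p - 2))
      * ⟪(x + y) - (x' + y'), f x y - f x' y'⟫ ≤ L * (‖x - x'‖ ^ p + ‖y - y'‖ ^ p))
    (h2 : ∀ x x' y y' : E, ⟪(x - y) - (x' - y'), f x y - f x' y'⟫
      + 4 * (p - 1) * ‖g x y - g x' y'‖ ^ 2 ≤ L * ‖(x - y) - (x' - y')‖ ^ 2) (x x' y y' : E) :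
    ‖x - x'‖ ^ (p - 2) * (⟪x - x', f x y - f x' y'⟫ + 2 * (p - 1) * ‖g x y - g x' y'‖ ^ 2)
      + ‖y - y'‖ ^ (p - 2) * (⟪y - y', f y x - f y' x'⟫ + 2 * (p - 1) * ‖g y x - g y' x'‖ ^ 2)
      ≤ 5 / 2 * L * ‖x - x'‖ ^ p + 5 / 2 * L * ‖y - y'‖ ^ p := by
  have hx := interaction_le_of_one_sided_lipschitz h2 x x' y y'
  have hy := interaction_le_of_one_sided_lipschitz h2 y y' x x'
  have hF : f y x - f y' x' = -(f x y - f x' y') := by rw [hanti y x, hanti y' x']; abel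
  rw [hF, add_comm (y - y'), norm_sub_rev (y - y')] at hy
  rw [hF]
  simp only [inner_neg_right] at hy ⊢
  have hsym := h1 x x' y y'
  rw [show (x + y) - (x' + y') = (x - x') + (y - y') by abel] at hsym
  have hdiff := mul_le_mul_of_nonneg_left
    ((pow_le_pow_left₀ (norm_nonneg _) (norm_sub_le (x - x') (y - y')) 2).trans add_sq_le)
    (mul_nonneg hL (add_nonneg (Real.rpow_nonneg (norm_nonneg (x - x')) (p - 2))
      (Real.rpow_nonneg (norm_nonneg (y - y')) (p - 2))))
  have hcheb := mul_le_mul_of_nonneg_left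
    (Real.rpow_sub_two_add_mul_sq_add_sq_le hp (norm_nonneg (x - x')) (norm_nonneg (y - y'))) hL
  linarith

end Interaction

theorem stmt8 (d l : ℕ)
    (f : EuclideanSpace ℝ (Fin d) → EuclideanSpace ℝ (Fin d) → EuclideanSpace ℝ (Fin d))
    (g : EuclideanSpace ℝ (Fin d) → EuclideanSpace ℝ (Fin d) → EuclideanSpace ℝ (Fin d × Fin l))
    (L p : ℝ) (hL : 0 ≤ L) (hp : 2 ≤ p)
    (hanti : ∀ x y : EuclideanSpace ℝ (Fin d), f x y = - f y x)
    (h1 : ∀ x x' y y' : EuclideanSpace ℝ (Fin d),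
      (‖x - x'‖ ^ (p - 2) - ‖y - y'‖ ^ (p - 2)) * ⟪(x + y) - (x' + y'), f x y - f x' y'⟫
        ≤ L * (‖x - x'‖ ^ p + ‖y - y'‖ ^ p))
    (h2 : ∀ x x' y y' : EuclideanSpace ℝ (Fin d),
      ⟪(x - y) - (x' - y'), f x y - f x' y'⟫ + 4 * (p - 1) * ‖g x y - g x' y'‖ ^ 2
        ≤ L * ‖(x - y) - (x' - y')‖ ^ 2) :
    ∃ K > 0, ∀ (N : ℕ) (x xb : Fin N → EuclideanSpace ℝ (Fin d)),
      (1 / (N : ℝ) ^ 2) *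
          ∑ i, ∑ j, ‖x i - xb i‖ ^ (p - 2) *
            (⟪x i - xb i, f (x i) (x j) - f (xb i) (xb j)⟫
              + 2 * (p - 1) * ‖g (x i) (x j) - g (xb i) (xb j)‖ ^ 2)
        ≤ (K / (N : ℝ)) * ∑ i, ‖x i - xb i‖ ^ p := by
  refine ⟨5 / 2 * L + 1, by positivity, fun N x xb => ?_⟩
  rcases N.eq_zero_or_pos with rfl | hN
  · simp
  have hsum := Finset.sum_sum_le_card_nsmul_of_add_swap_le fun i j =>
    interaction_add_swap_le hL hp hanti h1 h2 (x i) (xb i) (x j) (xb j)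
  rw [← Finset.mul_sum, Fintype.card_fin, nsmul_eq_mul] at hsum
  have hS : 0 ≤ ∑ i, ‖x i - xb i‖ ^ p := by positivity
  calc (1 / (N : ℝ) ^ 2) * _ ≤ (1 / (N : ℝ) ^ 2) * (N * (5 / 2 * L * ∑ i, ‖x i - xb i‖ ^ p)) :=
        mul_le_mul_of_nonneg_left hsum (by positivity)
    _ = (5 / 2 * L / N) * ∑ i, ‖x i - xb i‖ ^ p := by field_simp
    _ ≤ ((5 / 2 * L + 1) / N) * ∑ i, ‖x i - xb i‖ ^ p := by gcongr; linarith
end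

section
/- Let f : ℝ^d × ℝ^d → ℝ^d and g : ℝ^d × ℝ^d → ℝ^{d×l} satisfy, for positive constants L₁ (one-sided), L₂, L₃ and q > 0: (i) ⟨(x-x')-(y-y'), f(x,y) - f(x',y')⟩ + 4|g(x,y) - g(x',y')|² ≤ -L₁(1 + |x-y|^q + |x'-y'|^q)|(x-x')-(y-y')|²; (ii) ⟨(x-x')-(y-y'), f(x,y)|x'-y'|^q - f(x',y')|x-y|^q⟩ + 4|g(x,y)|x'-y'|^q - g(x',y')|x-y|^q|² ≤ (L₂(1+|x-y|^q+|x'-y'|^q) - L₃|x-y|^q|x'-y'|^q)·|(x-x')-(y-y')|², for all x,x',y,y' ∈ ℝ^d. Define f^n(x,y) := f(x,y)/(1+n^{-1/2}|x-y|^q) and g^n analogously. Then for every n ≥ 1 with n^{-1/2} ≤ L₁/(2L₂), ⟨(x-x')-(y-y'), f^n(x,y) - f^n(x',y')⟩ + 2|g^n(x,y) - g^n(x',y')|² ≤ -(min{L₁/2, L₃}) |(x-x')-(y-y')|² for all x,x',y,y' ∈ ℝ^d. -/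
open RealInnerProductSpace

set_option maxHeartbeats 1000000 in
theorem stmt11 (d l : ℕ)
    (f : EuclideanSpace ℝ (Fin d) → EuclideanSpace ℝ (Fin d) → EuclideanSpace ℝ (Fin d))
    (g : EuclideanSpace ℝ (Fin d) → EuclideanSpace ℝ (Fin d) → EuclideanSpace ℝ (Fin d × Fin l))
    (L₁ L₂ L₃ q : ℝ) (hL₁ : 0 < L₁) (hL₂ : 0 < L₂) (hL₃ : 0 < L₃) (hq : 0 < q)
    (h1 : ∀ x x' y y' : EuclideanSpace ℝ (Fin d),
      ⟪(x - x') - (y - y'), f x y - f x' y'⟫ + 4 * ‖g x y - g x' y'‖ ^ 2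
        ≤ -L₁ * (1 + ‖x - y‖ ^ q + ‖x' - y'‖ ^ q) * ‖(x - x') - (y - y')‖ ^ 2)
    (h2 : ∀ x x' y y' : EuclideanSpace ℝ (Fin d),
      ⟪(x - x') - (y - y'), ‖x' - y'‖ ^ q • f x y - ‖x - y‖ ^ q • f x' y'⟫
          + 4 * ‖(‖x' - y'‖ ^ q) • g x y - (‖x - y‖ ^ q) • g x' y'‖ ^ 2
        ≤ (L₂ * (1 + ‖x - y‖ ^ q + ‖x' - y'‖ ^ q) - L₃ * ‖x - y‖ ^ q * ‖x' - y'‖ ^ q)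
            * ‖(x - x') - (y - y')‖ ^ 2) :
    ∀ n : ℕ, 1 ≤ n → (n : ℝ) ^ (-(1/2) : ℝ) ≤ L₁ / (2 * L₂) →
      ∀ x x' y y' : EuclideanSpace ℝ (Fin d),
        ⟪(x - x') - (y - y'),
            (1 + (n : ℝ) ^ (-(1/2) : ℝ) * ‖x - y‖ ^ q)⁻¹ • f x y
              - (1 + (n : ℝ) ^ (-(1/2) : ℝ) * ‖x' - y'‖ ^ q)⁻¹ • f x' y'⟫
          + 2 * ‖(1 + (n : ℝ) ^ (-(1/2) : ℝ) * ‖x - y‖ ^ q)⁻¹ • g x y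
              - (1 + (n : ℝ) ^ (-(1/2) : ℝ) * ‖x' - y'‖ ^ q)⁻¹ • g x' y'‖ ^ 2
        ≤ -(min (L₁ / 2) L₃) * ‖(x - x') - (y - y')‖ ^ 2 := by
  intro n hn hnL x x' y y'
  have hn1 : (1:ℝ) ≤ (n:ℝ) := by exact_mod_cast hn
  set ε : ℝ := (n : ℝ) ^ (-(1/2) : ℝ) with hεdef
  have hε0 : 0 ≤ ε := Real.rpow_nonneg (by positivity) _
  have hε1 : ε ≤ 1 := Real.rpow_le_one_of_one_le_of_nonpos hn1 (by norm_num)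
  set a : ℝ := ‖x - y‖ ^ q with hadef
  set b : ℝ := ‖x' - y'‖ ^ q with hbdef
  have ha : 0 ≤ a := Real.rpow_nonneg (norm_nonneg _) q
  have hb : 0 ≤ b := Real.rpow_nonneg (norm_nonneg _) q
  set A : ℝ := 1 + ε * a with hAdef
  set B : ℝ := 1 + ε * b with hBdef
  have hA0 : 0 < A := by nlinarith [mul_nonneg hε0 ha]
  have hB0 : 0 < B := by nlinarith [mul_nonneg hε0 hb]
  have hA' : A ≠ 0 := hA0.ne'
  have hB' : B ≠ 0 := hB0.ne'
  have hAB1 : 1 ≤ A * B := by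
    nlinarith [mul_nonneg hε0 ha, mul_nonneg hε0 hb,
      mul_nonneg (mul_nonneg hε0 ha) (mul_nonneg hε0 hb)]
  set c : ℝ := (A * B)⁻¹ with hcdef
  have hc0 : 0 < c := by positivity
  have hc1 : c ≤ 1 := by
    rw [hcdef]
    exact inv_le_one_of_one_le₀ hAB1
  have hcAB : c * (A * B) = 1 := inv_mul_cancel₀ (by positivity)
  have hidF : A⁻¹ • f x y - B⁻¹ • f x' y'
      = c • ((f x y - f x' y') + ε • (b • f x y - a • f x' y')) := by
    rw [hcdef]
    match_scalars <;> (field_simp; try ring)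
  have hidG : A⁻¹ • g x y - B⁻¹ • g x' y'
      = c • ((g x y - g x' y') + ε • (b • g x y - a • g x' y')) := by
    rw [hcdef]
    match_scalars <;> (field_simp; try ring)
  have hinner : ⟪x - x' - (y - y'), A⁻¹ • f x y - B⁻¹ • f x' y'⟫
      = c * (⟪x - x' - (y - y'), f x y - f x' y'⟫
          + ε * ⟪x - x' - (y - y'), b • f x y - a • f x' y'⟫) := by
    rw [hidF, real_inner_smul_right, inner_add_right, real_inner_smul_right]
  have hnormg : ‖A⁻¹ • g x y - B⁻¹ • g x' y'‖ ^ 2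
      = c ^ 2 * ‖(g x y - g x' y') + ε • (b • g x y - a • g x' y')‖ ^ 2 := by
    rw [hidG, norm_smul, Real.norm_eq_abs, abs_of_pos hc0, mul_pow]
  have hNbound : ‖(g x y - g x' y') + ε • (b • g x y - a • g x' y')‖ ^ 2
      ≤ 2 * ‖g x y - g x' y'‖ ^ 2 + 2 * ε * ‖b • g x y - a • g x' y'‖ ^ 2 := by
    have h₁ := norm_add_le (g x y - g x' y') (ε • (b • g x y - a • g x' y'))
    rw [norm_smul, Real.norm_eq_abs, abs_of_nonneg hε0] at h₁
    set r : ℝ := ‖(g x y - g x' y') + ε • (b • g x y - a • g x' y')‖ with hrdef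
    set s : ℝ := ‖g x y - g x' y'‖ with hsdef
    set t : ℝ := ‖b • g x y - a • g x' y'‖ with htdef
    have hr0 : 0 ≤ r := norm_nonneg _
    have hs0 : 0 ≤ s := norm_nonneg _
    have ht0 : 0 ≤ t := norm_nonneg _
    nlinarith [sq_nonneg (s - ε * t), mul_nonneg (mul_nonneg hε0 (by linarith : (0:ℝ) ≤ 1 - ε)) (sq_nonneg t), mul_le_mul h₁ h₁ hr0 (by linarith)]
  rw [hinner, hnormg]
  have hm1 : min (L₁/2) L₃ ≤ L₁/2 := min_le_left _ _
  have hm2 : min (L₁/2) L₃ ≤ L₃ := min_le_right _ _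
  have hm0 : 0 < min (L₁/2) L₃ := lt_min (by linarith) hL₃
  have h1' := h1 x x' y y'
  have h2' := h2 x x' y y'
  rw [← hadef, ← hbdef] at h1' h2'
  have hZ0 : (0:ℝ) ≤ ‖x - x' - (y - y')‖ ^ 2 := sq_nonneg _
  have hεL : ε * (2 * L₂) ≤ L₁ := (le_div_iff₀ (by positivity)).mp hnL
  have key : (min (L₁/2) L₃) * (A * B)
      ≤ L₁ * (1 + a + b) - ε * (L₂ * (1 + a + b) - L₃ * a * b) := by
    rw [hAdef, hBdef]
    nlinarith [mul_nonneg (mul_nonneg hm0.le (by linarith : (0:ℝ) ≤ 1 - ε)) (add_nonneg ha hb),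
      mul_nonneg (mul_nonneg (mul_nonneg hm0.le hε0) (by linarith : (0:ℝ) ≤ 1 - ε)) (mul_nonneg ha hb),
      mul_nonneg (by linarith : (0:ℝ) ≤ L₁/2 - min (L₁/2) L₃) (by linarith : (0:ℝ) ≤ 1 + a + b),
      mul_nonneg (by linarith : (0:ℝ) ≤ L₃ - min (L₁/2) L₃) (mul_nonneg hε0 (mul_nonneg ha hb)),
      mul_nonneg (by linarith : (0:ℝ) ≤ L₁/2 - ε * L₂) (by linarith : (0:ℝ) ≤ 1 + a + b)]
  have hN0 : (0:ℝ) ≤ ‖(g x y - g x' y') + ε • (b • g x y - a • g x' y')‖ ^ 2 := sq_nonneg _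
  have s1 : c ^ 2 * ‖(g x y - g x' y') + ε • (b • g x y - a • g x' y')‖ ^ 2
      ≤ c * (2 * ‖g x y - g x' y'‖ ^ 2 + 2 * ε * ‖b • g x y - a • g x' y'‖ ^ 2) := by
    have w1 : c ^ 2 * ‖(g x y - g x' y') + ε • (b • g x y - a • g x' y')‖ ^ 2
        ≤ c * ‖(g x y - g x' y') + ε • (b • g x y - a • g x' y')‖ ^ 2 := by
      nlinarith [mul_nonneg (mul_nonneg hc0.le (by linarith : (0:ℝ) ≤ 1 - c)) hN0]
    have w2 := mul_le_mul_of_nonneg_left hNbound hc0.le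
    linarith
  have s3 := mul_le_mul_of_nonneg_left h2' hε0
  have s4 : c * ((⟪x - x' - (y - y'), f x y - f x' y'⟫ + 4 * ‖g x y - g x' y'‖ ^ 2)
        + ε * (⟪x - x' - (y - y'), b • f x y - a • f x' y'⟫
          + 4 * ‖b • g x y - a • g x' y'‖ ^ 2))
      ≤ c * (-L₁ * (1 + a + b) * ‖x - x' - (y - y')‖ ^ 2
        + ε * ((L₂ * (1 + a + b) - L₃ * a * b) * ‖x - x' - (y - y')‖ ^ 2)) :=
    mul_le_mul_of_nonneg_left (by linarith) hc0.le
  have t : (min (L₁/2) L₃) * (A * B) * ‖x - x' - (y - y')‖ ^ 2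
      ≤ (L₁ * (1 + a + b) - ε * (L₂ * (1 + a + b) - L₃ * a * b)) * ‖x - x' - (y - y')‖ ^ 2 :=
    mul_le_mul_of_nonneg_right key hZ0
  have t2 := mul_le_mul_of_nonneg_left t hc0.le
  have e : c * ((min (L₁/2) L₃) * (A * B) * ‖x - x' - (y - y')‖ ^ 2)
      = (min (L₁/2) L₃) * ‖x - x' - (y - y')‖ ^ 2 := by
    rw [show c * ((min (L₁/2) L₃) * (A * B) * ‖x - x' - (y - y')‖ ^ 2)
      = (c * (A * B)) * ((min (L₁/2) L₃) * ‖x - x' - (y - y')‖ ^ 2) from by ring, hcAB, one_mul]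
  linarith [s1, s4, t2, e]
end

section
/- Let f : ℝ^d × ℝ^d → ℝ^d satisfy, for constants L₁, L₂ > 0 and q > 0: (i) |f(x,y) - f(x',y')|² ≤ L₁(1 + |x-y|^{2q} + |x'-y'|^{2q})|(x-x')-(y-y')|²; (ii) |f(x,y)|x'-y'|^q - f(x',y')|x-y|^q|² ≤ L₂(1 + |x-y|^{2q} + |x'-y'|^{2q} + |x-y|^{2q}|x'-y'|^{2q})|(x-x')-(y-y')|², for all x,x',y,y' ∈ ℝ^d. Let f^n(x,y) := f(x,y)/(1+n^{-1/2}|x-y|^q). Then for all n ≥ 1 and all x,x',y,y', |f^n(x,y) - f^n(x',y')|² ≤ 4n · max{L₁, L₂} · |(x-x')-(y-y')|². -/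
/-!
Writing `p = 1 + ε a`, `r = 1 + ε b` with `ε = n^{-1/2}`, `a = |x-y|^q`, `b = |x'-y'|^q`, one has
`f x y / p - f x' y' / r = ((f x y - f x' y') + ε (b f x y - a f x' y')) / (p r)`.
Both terms of the numerator are controlled by the two hypotheses, and after `(s+t)² ≤ 2s² + 2t²`
the resulting weight `1 + a² + b² + ε² a² b²` is at most `n (1 + ε² a²) (1 + ε² b²) ≤ n p² r²`.
-/

lemma inv_smul_sub_inv_smul_eq {E : Type*} [AddCommGroup E] [Module ℝ E] (u v : E)
    {p r : ℝ} (hp : p ≠ 0) (hr : r ≠ 0) :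
    p⁻¹ • u - r⁻¹ • v = (p * r)⁻¹ • (r • u - p • v) := by
  match_scalars <;> field_simp

lemma norm_add_sq_le {E : Type*} [SeminormedAddCommGroup E] (u w : E) :
    ‖u + w‖ ^ 2 ≤ 2 * (‖u‖ ^ 2 + ‖w‖ ^ 2) :=
  (pow_le_pow_left₀ (norm_nonneg _) (norm_add_le u w) 2).trans add_sq_le

lemma mul_one_add_add_add_mul_le {t A B : ℝ} (ht : t ≤ 1) :
    t * (1 + A + B + t * (A * B)) ≤ (1 + t * A) * (1 + t * B) := by
  nlinarith

lemma norm_sq_inv_smul_sub_inv_smul_le {E : Type*} [SeminormedAddCommGroup E] [NormedSpace ℝ E]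
    (u v : E) {a b ε C : ℝ} (ha : 0 ≤ a) (hb : 0 ≤ b) (hε : 0 < ε) (hε1 : ε ≤ 1) (hC : 0 ≤ C)
    (h1 : ‖u - v‖ ^ 2 ≤ (1 + a ^ 2 + b ^ 2) * C)
    (h2 : ‖b • u - a • v‖ ^ 2 ≤ (1 + a ^ 2 + b ^ 2 + a ^ 2 * b ^ 2) * C) :
    ‖(1 + ε * a)⁻¹ • u - (1 + ε * b)⁻¹ • v‖ ^ 2 ≤ 4 * C / ε ^ 2 := by
  have hp : 0 < 1 + ε * a := by positivity
  have hr : 0 < 1 + ε * b := by positivity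
  have hsplit : (1 + ε * b) • u - (1 + ε * a) • v = (u - v) + ε • (b • u - a • v) := by
    simp only [add_smul, one_smul, smul_sub, smul_smul]
    abel
  have ht : ε ^ 2 ≤ 1 := pow_le_one₀ hε.le hε1
  have hnum : ‖(u - v) + ε • (b • u - a • v)‖ ^ 2
      ≤ 4 * C / ε ^ 2 * ((1 + ε * a) ^ 2 * (1 + ε * b) ^ 2) := by
    have hsmul : ‖ε • (b • u - a • v)‖ ^ 2 = ε ^ 2 * ‖b • u - a • v‖ ^ 2 := by
      rw [norm_smul, Real.norm_of_nonneg hε.le, mul_pow]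
    have hpa : 1 + ε ^ 2 * a ^ 2 ≤ (1 + ε * a) ^ 2 := by nlinarith [mul_nonneg hε.le ha]
    have hrb : 1 + ε ^ 2 * b ^ 2 ≤ (1 + ε * b) ^ 2 := by nlinarith [mul_nonneg hε.le hb]
    calc ‖(u - v) + ε • (b • u - a • v)‖ ^ 2
        ≤ 2 * ((1 + a ^ 2 + b ^ 2) * C + ε ^ 2 * ((1 + a ^ 2 + b ^ 2 + a ^ 2 * b ^ 2) * C)) := by
          grw [norm_add_sq_le, hsmul, h1, h2]
      _ ≤ 4 * C * (1 + a ^ 2 + b ^ 2 + ε ^ 2 * (a ^ 2 * b ^ 2)) := by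
          nlinarith [mul_nonneg (mul_nonneg (sub_nonneg.2 ht) hC)
            (by positivity : 0 ≤ 1 + a ^ 2 + b ^ 2),
            mul_nonneg (mul_nonneg hC (sq_nonneg ε)) (mul_nonneg (sq_nonneg a) (sq_nonneg b))]
      _ ≤ 4 * C / ε ^ 2 * ((1 + ε ^ 2 * a ^ 2) * (1 + ε ^ 2 * b ^ 2)) := by
          rw [div_mul_eq_mul_div, le_div_iff₀ (by positivity), mul_assoc, mul_comm _ (ε ^ 2)]
          exact mul_le_mul_of_nonneg_left (mul_one_add_add_add_mul_le ht) (by positivity)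
      _ ≤ 4 * C / ε ^ 2 * ((1 + ε * a) ^ 2 * (1 + ε * b) ^ 2) := by gcongr
  rw [inv_smul_sub_inv_smul_eq u v hp.ne' hr.ne', hsplit, norm_smul, mul_pow,
    Real.norm_of_nonneg (by positivity), inv_pow, inv_mul_le_iff₀ (by positivity)]
  exact hnum.trans_eq (by ring)

theorem stmt12_general (d : ℕ)
    (f : EuclideanSpace ℝ (Fin d) → EuclideanSpace ℝ (Fin d) → EuclideanSpace ℝ (Fin d))
    (L₁ L₂ q : ℝ) (hL₁ : 0 < L₁)
    (h1 : ∀ x x' y y' : EuclideanSpace ℝ (Fin d),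
      ‖f x y - f x' y'‖ ^ 2
        ≤ L₁ * (1 + ‖x - y‖ ^ (2 * q) + ‖x' - y'‖ ^ (2 * q)) * ‖(x - x') - (y - y')‖ ^ 2)
    (h2 : ∀ x x' y y' : EuclideanSpace ℝ (Fin d),
      ‖(‖x' - y'‖ ^ q) • f x y - (‖x - y‖ ^ q) • f x' y'‖ ^ 2
        ≤ L₂ * (1 + ‖x - y‖ ^ (2 * q) + ‖x' - y'‖ ^ (2 * q)
              + ‖x - y‖ ^ (2 * q) * ‖x' - y'‖ ^ (2 * q)) * ‖(x - x') - (y - y')‖ ^ 2) :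
    ∀ n : ℕ, 1 ≤ n → ∀ x x' y y' : EuclideanSpace ℝ (Fin d),
      ‖(1 + (n : ℝ) ^ (-(1/2) : ℝ) * ‖x - y‖ ^ q)⁻¹ • f x y
          - (1 + (n : ℝ) ^ (-(1/2) : ℝ) * ‖x' - y'‖ ^ q)⁻¹ • f x' y'‖ ^ 2
        ≤ 4 * (n : ℝ) * max L₁ L₂ * ‖(x - x') - (y - y')‖ ^ 2 := by
  intro n hn x x' y y'
  have hn0 : (0 : ℝ) < n := by exact_mod_cast hn
  set ε : ℝ := (n : ℝ) ^ (-(1/2) : ℝ)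
  have hε : 0 < ε := Real.rpow_pos_of_pos hn0 _
  have hε1 : ε ≤ 1 := Real.rpow_le_one_of_one_le_of_nonpos (by exact_mod_cast hn) (by norm_num)
  have hε2 : ε ^ 2 = (n : ℝ)⁻¹ := by
    rw [← Real.rpow_natCast, ← Real.rpow_mul hn0.le]
    norm_num [Real.rpow_neg_one]
  have hsq (z : EuclideanSpace ℝ (Fin d)) : ‖z‖ ^ (2 * q) = (‖z‖ ^ q) ^ 2 := by
    rw [mul_comm, Real.rpow_mul (norm_nonneg _), Real.rpow_two]
  have hΔ : 0 ≤ max L₁ L₂ * ‖(x - x') - (y - y')‖ ^ 2 :=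
    mul_nonneg (le_max_of_le_left hL₁.le) (sq_nonneg _)
  have key := norm_sq_inv_smul_sub_inv_smul_le (f x y) (f x' y')
    (Real.rpow_nonneg (norm_nonneg (x - y)) q) (Real.rpow_nonneg (norm_nonneg (x' - y')) q)
    hε hε1 hΔ ?_ ?_
  · rw [hε2, div_inv_eq_mul] at key
    linarith
  · calc _ ≤ _ := h1 x x' y y'
      _ ≤ _ := by rw [hsq, hsq, mul_assoc, mul_left_comm]; gcongr; exact le_max_left _ _
  · calc _ ≤ _ := h2 x x' y y'
      _ ≤ _ := by rw [hsq, hsq, mul_assoc, mul_left_comm]; gcongr; exact le_max_right _ _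

theorem stmt12 (d : ℕ)
    (f : EuclideanSpace ℝ (Fin d) → EuclideanSpace ℝ (Fin d) → EuclideanSpace ℝ (Fin d))
    (L₁ L₂ q : ℝ) (hL₁ : 0 < L₁) (hL₂ : 0 < L₂) (hq : 0 < q)
    (h1 : ∀ x x' y y' : EuclideanSpace ℝ (Fin d),
      ‖f x y - f x' y'‖ ^ 2
        ≤ L₁ * (1 + ‖x - y‖ ^ (2 * q) + ‖x' - y'‖ ^ (2 * q)) * ‖(x - x') - (y - y')‖ ^ 2)
    (h2 : ∀ x x' y y' : EuclideanSpace ℝ (Fin d),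
      ‖(‖x' - y'‖ ^ q) • f x y - (‖x - y‖ ^ q) • f x' y'‖ ^ 2
        ≤ L₂ * (1 + ‖x - y‖ ^ (2 * q) + ‖x' - y'‖ ^ (2 * q)
              + ‖x - y‖ ^ (2 * q) * ‖x' - y'‖ ^ (2 * q)) * ‖(x - x') - (y - y')‖ ^ 2) :
    ∀ n : ℕ, 1 ≤ n → ∀ x x' y y' : EuclideanSpace ℝ (Fin d),
      ‖(1 + (n : ℝ) ^ (-(1/2) : ℝ) * ‖x - y‖ ^ q)⁻¹ • f x y
          - (1 + (n : ℝ) ^ (-(1/2) : ℝ) * ‖x' - y'‖ ^ q)⁻¹ • f x' y'‖ ^ 2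
        ≤ 4 * (n : ℝ) * max L₁ L₂ * ‖(x - x') - (y - y')‖ ^ 2 :=
  stmt12_general d f L₁ L₂ q hL₁ h1 h2
end
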